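/- Let x and y be two independent standard normal random vectors in ℝⁿ and α ∈ (0,1]. Then ℙ[α⟨x,x⟩ ≤ ⟨x,y⟩] ≤ (1+α²)^{−n/2}. -/

import Mathlib

/-! Exponential Markov (Chernoff) bound: the event implies `α⟪x, y⟫ - α²‖x‖² ≥ 0`.
Integrating out `y` first, `⟪x, y⟫` is centred Gaussian with variance `‖x‖²`, so
`𝔼_y exp (α⟪x, y⟫) = exp (α²‖x‖²/2)`, leaving `𝔼_x exp (-α²‖x‖²/2) = (1 + α²)^(-n/2)`. -/

open MeasureTheory ProbabilityTheory Real
open scoped RealInnerProductSpace ENNReal NNReal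

/-- The standard Gaussian measure on ℝⁿ. -/
noncomputable def stdGaussian (n : ℕ) : Measure (EuclideanSpace ℝ (Fin n)) :=
  volume.withDensity fun x => ENNReal.ofReal ((2 * Real.pi) ^ (-(n:ℝ)/2) * Real.exp (-‖x‖^2/2))

section GaussianIntegral

variable {V : Type*} [NormedAddCommGroup V] [InnerProductSpace ℝ V] [FiniteDimensional ℝ V]
  [MeasurableSpace V] [BorelSpace V] {b : ℝ}

lemma integrable_rexp_neg_mul_sq_norm_add (hb : 0 < b) (c : ℝ) (w : V) :
    Integrable fun v : V => rexp (-b * ‖v‖ ^ 2 + c * ⟪w, v⟫) := by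
  convert (GaussianFourier.integrable_cexp_neg_mul_sq_norm_add (V := V) (b := (b : ℂ))
    (by simpa using hb) c w).norm using 2 with v
  rw [Complex.norm_exp]
  simp [← Complex.ofReal_pow]

lemma integral_rexp_neg_mul_sq_norm_add (hb : 0 < b) (c : ℝ) (w : V) :
    ∫ v : V, rexp (-b * ‖v‖ ^ 2 + c * ⟪w, v⟫)
      = (π / b) ^ (Module.finrank ℝ V / 2 : ℝ) * rexp (c ^ 2 * ‖w‖ ^ 2 / (4 * b)) := by
  have h := GaussianFourier.integral_cexp_neg_mul_sq_norm_add (V := V) (b := (b : ℂ))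
    (by simpa using hb) c w
  rw [← Complex.ofReal_inj, ← integral_complex_ofReal]
  push_cast
  rw [h, Complex.ofReal_cpow (by positivity)]
  push_cast
  rfl

lemma lintegral_ofReal_rexp_neg_mul_sq_norm_add (hb : 0 < b) (c : ℝ) (w : V) :
    ∫⁻ v : V, ENNReal.ofReal (rexp (-b * ‖v‖ ^ 2 + c * ⟪w, v⟫))
      = ENNReal.ofReal
          ((π / b) ^ (Module.finrank ℝ V / 2 : ℝ) * rexp (c ^ 2 * ‖w‖ ^ 2 / (4 * b))) := by
  rw [← integral_rexp_neg_mul_sq_norm_add hb c w,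
    ofReal_integral_eq_lintegral_ofReal (integrable_rexp_neg_mul_sq_norm_add hb c w)
      (ae_of_all _ fun v => (exp_pos _).le)]

end GaussianIntegral

lemma measure_nonneg_le_lintegral_exp {X : Type*} [MeasurableSpace X] (μ : Measure X)
    {f : X → ℝ} (hf : AEMeasurable f μ) :
    μ {x | 0 ≤ f x} ≤ ∫⁻ x, ENNReal.ofReal (rexp (f x)) ∂μ := by
  calc μ {x | 0 ≤ f x} ≤ 1 * μ {x | 1 ≤ ENNReal.ofReal (rexp (f x))} := by
        rw [one_mul]
        refine measure_mono fun x hx => ?_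
        simpa using one_le_exp hx
    _ ≤ ∫⁻ x, ENNReal.ofReal (rexp (f x)) ∂μ := mul_meas_ge_le_lintegral₀ (by fun_prop) 1

section StdGaussian

variable {n : ℕ}

instance : SFinite (stdGaussian n) := by
  unfold _root_.stdGaussian
  infer_instance

lemma lintegral_stdGaussian_ofReal_exp {b : ℝ} (hb : -1 / 2 < b) (c : ℝ)
    (w : EuclideanSpace ℝ (Fin n)) :
    ∫⁻ v, ENNReal.ofReal (rexp (-b * ‖v‖ ^ 2 + c * ⟪w, v⟫)) ∂stdGaussian n
      = ENNReal.ofReal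
          ((1 + 2 * b) ^ (-(n : ℝ) / 2) * rexp (c ^ 2 * ‖w‖ ^ 2 / (2 * (1 + 2 * b)))) := by
  have hb_half : 0 < b + 1 / 2 := by linarith
  have h2b : 0 < 1 + 2 * b := by linarith
  rw [_root_.stdGaussian, lintegral_withDensity_eq_lintegral_mul₀ (by fun_prop) (by fun_prop)]
  have hdensity : ∀ v : EuclideanSpace ℝ (Fin n),
      ENNReal.ofReal ((2 * π) ^ (-(n : ℝ) / 2) * rexp (-‖v‖ ^ 2 / 2))
        * ENNReal.ofReal (rexp (-b * ‖v‖ ^ 2 + c * ⟪w, v⟫))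
      = ENNReal.ofReal ((2 * π) ^ (-(n : ℝ) / 2))
        * ENNReal.ofReal (rexp (-(b + 1 / 2) * ‖v‖ ^ 2 + c * ⟪w, v⟫)) := by
    intro v
    rw [ENNReal.ofReal_mul (by positivity), mul_assoc, ← ENNReal.ofReal_mul (by positivity),
      ← exp_add]
    ring_nf
  simp_rw [Pi.mul_apply, hdensity]
  rw [lintegral_const_mul' _ _ ENNReal.ofReal_ne_top,
    lintegral_ofReal_rexp_neg_mul_sq_norm_add hb_half, finrank_euclideanSpace_fin,
    ← ENNReal.ofReal_mul (by positivity)]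
  congr 1
  have hπ : π / (b + 1 / 2) = 2 * π / (1 + 2 * b) := by field_simp; ring
  have hexponent :
      c ^ 2 * ‖w‖ ^ 2 / (4 * (b + 1 / 2)) = c ^ 2 * ‖w‖ ^ 2 / (2 * (1 + 2 * b)) := by
    ring_nf
  rw [hπ, hexponent, div_rpow (by positivity) h2b.le, neg_div, rpow_neg (by positivity),
    rpow_neg h2b.le]
  field_simp

lemma lintegral_stdGaussian_ofReal_exp_inner (c : ℝ) (w : EuclideanSpace ℝ (Fin n)) :
    ∫⁻ v, ENNReal.ofReal (rexp (c * ⟪w, v⟫)) ∂stdGaussian n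
      = ENNReal.ofReal (rexp (c ^ 2 * ‖w‖ ^ 2 / 2)) := by
  simpa using lintegral_stdGaussian_ofReal_exp (n := n) (b := 0) (by norm_num) c w

lemma lintegral_stdGaussian_ofReal_exp_neg_mul_sq_norm {b : ℝ} (hb : -1 / 2 < b) :
    ∫⁻ v, ENNReal.ofReal (rexp (-b * ‖v‖ ^ 2)) ∂stdGaussian n
      = ENNReal.ofReal ((1 + 2 * b) ^ (-(n : ℝ) / 2)) := by
  simpa using lintegral_stdGaussian_ofReal_exp (n := n) hb 0 0

end StdGaussian

theorem stmt_8_general (n : ℕ) (α : ℝ) (hα0 : 0 < α) :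
    ((stdGaussian n).prod (stdGaussian n)) {p | α * ⟪p.1, p.1⟫ ≤ ⟪p.1, p.2⟫} ≤
      ENNReal.ofReal ((1+α^2) ^ (-(n:ℝ)/2)) := by
  set μ := stdGaussian n
  have hsubset : {p : EuclideanSpace ℝ (Fin n) × EuclideanSpace ℝ (Fin n) |
      α * ⟪p.1, p.1⟫ ≤ ⟪p.1, p.2⟫} ⊆ {p | 0 ≤ α * ⟪p.1, p.2⟫ - α ^ 2 * ‖p.1‖ ^ 2} := by
    intro p hp
    simp only [Set.mem_ofPred_eq, real_inner_self_eq_norm_sq] at hp ⊢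
    nlinarith
  have hinner : ∀ x : EuclideanSpace ℝ (Fin n),
      ∫⁻ y, ENNReal.ofReal (rexp (α * ⟪x, y⟫ - α ^ 2 * ‖x‖ ^ 2)) ∂μ
        = ENNReal.ofReal (rexp (-(α ^ 2 / 2) * ‖x‖ ^ 2)) := by
    intro x
    simp_rw [sub_eq_add_neg, exp_add, ENNReal.ofReal_mul (exp_pos _).le]
    rw [lintegral_mul_const' _ _ ENNReal.ofReal_ne_top, lintegral_stdGaussian_ofReal_exp_inner,
      ← ENNReal.ofReal_mul (exp_pos _).le, ← exp_add]
    ring_nf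
  calc μ.prod μ {p | α * ⟪p.1, p.1⟫ ≤ ⟪p.1, p.2⟫}
      ≤ μ.prod μ {p | 0 ≤ α * ⟪p.1, p.2⟫ - α ^ 2 * ‖p.1‖ ^ 2} := measure_mono hsubset
    _ ≤ ∫⁻ p, ENNReal.ofReal (rexp (α * ⟪p.1, p.2⟫ - α ^ 2 * ‖p.1‖ ^ 2)) ∂μ.prod μ :=
        measure_nonneg_le_lintegral_exp _ (by fun_prop)
    _ = ∫⁻ x, ∫⁻ y, ENNReal.ofReal (rexp (α * ⟪x, y⟫ - α ^ 2 * ‖x‖ ^ 2)) ∂μ ∂μ :=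
        lintegral_prod _ (by fun_prop)
    _ = ∫⁻ x, ENNReal.ofReal (rexp (-(α ^ 2 / 2) * ‖x‖ ^ 2)) ∂μ := lintegral_congr hinner
    _ = ENNReal.ofReal ((1 + α ^ 2) ^ (-(n : ℝ) / 2)) := by
        rw [lintegral_stdGaussian_ofReal_exp_neg_mul_sq_norm (by nlinarith)]
        ring_nf

theorem stmt_8 (n : ℕ) (α : ℝ) (hα0 : 0 < α) (hα1 : α ≤ 1) :
    ((stdGaussian n).prod (stdGaussian n)) {p | α * ⟪p.1, p.1⟫ ≤ ⟪p.1, p.2⟫} ≤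
      ENNReal.ofReal ((1+α^2) ^ (-(n:ℝ)/2)) :=
  stmt_8_general n α hα0
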